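/- If w ≗° w̃ are unit-free compatible trees and M := M(w) = M(w̃), then there is a (necessarily unique) order-preserving bijection L_{≥M}(w) → L_{≥M}(w̃) between the sets of leaves of dimension at least M, with respect to the canonical linear order on leaves. -/

import Mathlib

namespace Sesq

/-- `(𝒪ₙ, X)`-labelled trees: leaves labelled by cells of `X`, internal vertices
labelled by unit generators `u_i` or composition/whiskering generators `∘_{i,j}`. -/
inductive PTree (X : Type) : Type
  | leaf : X → PTree X
  | unit : ℕ → PTree X → PTree X
  | comp : ℕ → ℕ → PTree X → PTree X → PTree X

namespace PTree

variable {X Y : Type}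

/-- Dimension of a labelled tree. -/
def dimT (dX : X → ℕ) : PTree X → ℕ
  | leaf c => dX c
  | unit i _ => i
  | comp i j _ _ => max i j

/-- Well-formedness: labels have the appropriate dimensions. -/
def WF (dX : X → ℕ) : PTree X → Prop
  | leaf _ => True
  | unit i x => WF dX x ∧ dimT dX x + 1 = i
  | comp i j x y => WF dX x ∧ WF dX y ∧ dimT dX x = i ∧ dimT dX y = j ∧ 1 ≤ i ∧ 1 ≤ j

/-- Relabelling the leaves of a tree. -/
def mapTree (f : X → Y) : PTree X → PTree Y
  | leaf c => leaf (f c)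
  | unit i x => unit i (mapTree f x)
  | comp i j x y => comp i j (mapTree f x) (mapTree f y)

/-- A tree contains no `u`-labelled vertices. -/
def UnitFree : PTree X → Prop
  | leaf _ => True
  | unit _ _ => False
  | comp _ _ x y => UnitFree x ∧ UnitFree y

/-- The ordered list of leaves of a tree (increasing for the canonical linear order:
every leaf of the left subtree of `∘_{i,j}` is greater than every leaf of the right one). -/
def leaves : PTree X → List X
  | leaf c => [c]
  | unit _ x => leaves x
  | comp _ _ x y => leaves y ++ leaves x

/-- The cell dimension `cd(x)`: the maximum of the dimensions of the cells labelling leaves. -/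
def cdim (dX : X → ℕ) (x : PTree X) : ℕ :=
  ((leaves x).map dX).foldr max 0

/-- The leaves of dimension at least `M`, in the canonical order. -/
def leavesGe (dX : X → ℕ) (M : ℕ) (x : PTree X) : List X :=
  (leaves x).filter fun c => M ≤ dX c

/-- `M(x) = max { j : x has at least two leaves of dimension ≥ j }`, with `M(x) = ⊥ = -∞`
if `x` has only one leaf. -/
def Mval (dX : X → ℕ) (x : PTree X) : WithBot ℕ :=
  (((List.range (cdim dX x + 1)).filter
      fun j => 2 ≤ ((leaves x).filter fun c => j ≤ dX c).length).map
      (fun j => (j : WithBot ℕ))).foldr max ⊥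

/-- The set of values `m(v) = min i j` over `∘_{i,j}`-labelled internal vertices. -/
def mset : PTree X → Finset ℕ
  | leaf _ => ∅
  | unit _ x => mset x
  | comp i j x y => insert (min i j) (mset x ∪ mset y)

/-- `H(x)`, the number of distinct values of `m(v)` over internal `∘`-vertices of `x`. -/
def Hval (x : PTree X) : ℕ := (mset x).card

/-- The reduction `r(x)`, deleting unit-generated subtrees; `none` plays the role of `∅`. -/
def reduce : PTree X → Option (PTree X)
  | leaf c => some (leaf c)
  | unit _ _ => none
  | comp i j x y =>
    if i = j then
      match reduce x, reduce y with
      | none, r => r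
      | r, none => r
      | some a, some b => some (comp i j a b)
    else if i < j then
      match reduce x, reduce y with
      | none, r => r
      | _, none => none
      | some a, some b => some (comp i j a b)
    else
      match reduce x, reduce y with
      | r, none => r
      | none, _ => none
      | some a, some b => some (comp i j a b)

/-- The slice `σ^M_ℓ(w)`, where the leaf `ℓ ∈ L_{≥M}(w)` is specified by its index
`idx` in the ordered list `leavesGe dX M w`. -/
def slice (dX : X → ℕ) (M : ℕ) : PTree X → ℕ → PTree X
  | leaf c, _ => leaf c
  | unit i x, _ => unit i x
  | comp i j x y, idx =>
    if M ≤ min i j then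
      if idx < (leavesGe dX M y).length then slice dX M y idx
      else slice dX M x (idx - (leavesGe dX M y).length)
    else if i < j then
      comp i (dimT dX (slice dX M y idx)) x (slice dX M y idx)
    else
      comp (dimT dX (slice dX M x idx)) j (slice dX M x idx) y

/-- Grafting the chain of units `u_{a+1} → ⋯ → u_b` on top of `t`. -/
def graftUnits (t : PTree X) (a : ℕ) : ℕ → PTree X
  | 0 => t
  | b + 1 => if a < b + 1 then unit (b + 1) (graftUnits t a b) else t

/-- The root of `t` is not a unit vertex. -/
def notUnitRoot (t : PTree X) : Prop := ∀ i y, t ≠ unit i y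

/-- If the root of `t` is a `∘`-vertex, then its `m`-value is `< m`. -/
def smallRoot (m : ℕ) (t : PTree X) : Prop :=
  ∀ a b u v, t = comp a b u v → min a b < m

/-- The labelled-subtree relation: `IsSubtree s t` iff `s` is the full subtree of `t`
above some vertex. -/
inductive IsSubtree : PTree X → PTree X → Prop
  | refl (t) : IsSubtree t t
  | unit (i x s) : IsSubtree s x → IsSubtree s (PTree.unit i x)
  | left (i j x y s) : IsSubtree s x → IsSubtree s (PTree.comp i j x y)
  | right (i j x y s) : IsSubtree s y → IsSubtree s (PTree.comp i j x y)

end PTree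

/-- A precomputad: a set of cells with dimensions and source/target trees. -/
structure Precomputad where
  cells : Type
  dim : cells → ℕ
  csrc : cells → PTree cells
  ctgt : cells → PTree cells

namespace Precomputad

variable (P : Precomputad)

/-- The source map on labelled trees. -/
def srcT : PTree P.cells → PTree P.cells
  | .leaf c => P.csrc c
  | .unit _ x => x
  | .comp i j x y =>
    if i = j then srcT y
    else if i < j then .comp i (j - 1) x (srcT y)
    else .comp (i - 1) j (srcT x) y

/-- The target map on labelled trees. -/
def tgtT : PTree P.cells → PTree P.cells
  | .leaf c => P.ctgt c
  | .unit _ x => x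
  | .comp i j x y =>
    if i = j then tgtT y
    else if i < j then .comp i (j - 1) x (tgtT y)
    else .comp (i - 1) j (tgtT x) y

/-- Iterated source. -/
def srcIter (k : ℕ) : PTree P.cells → PTree P.cells := P.srcT^[k]

/-- Iterated target. -/
def tgtIter (k : ℕ) : PTree P.cells → PTree P.cells := P.tgtT^[k]

end Precomputad

open PTree

mutual

/-- `≗`-compatibility of labelled trees. -/
inductive Compat (P : Precomputad) : PTree P.cells → Prop
  | leaf (c) : Compat P (.leaf c)
  | unit {i : ℕ} {x} : Compat P x → dimT P.dim x + 1 = i → Compat P (.unit i x)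
  | comp {i j : ℕ} {x y} : Compat P x → Compat P y →
      dimT P.dim x = i → dimT P.dim y = j → 1 ≤ min i j →
      Rel P (P.srcIter (i - min i j + 1) x) (P.tgtIter (j - min i j + 1) y) →
      Compat P (.comp i j x y)

/-- The equivalence relation `≗` on compatible trees, generated by the relations `ℰₙ`
(units, associativity and congruence). -/
inductive Rel (P : Precomputad) : PTree P.cells → PTree P.cells → Prop
  | refl {x} : Compat P x → Rel P x x
  | symm {x y} : Rel P x y → Rel P y x
  | trans {x y z} : Rel P x y → Rel P y z → Rel P x z
  | congr_unit {k x x'} : Rel P x x' → Rel P (.unit k x) (.unit k x')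
  | congr_comp {i j x x' y y'} : Rel P x x' → Rel P y y' →
      Compat P (.comp i j x y) → Compat P (.comp i j x' y') →
      Rel P (.comp i j x y) (.comp i j x' y')
  | lam_unit {i k x y} : i ≤ k → Compat P x → Compat P y →
      dimT P.dim x + 1 = i → dimT P.dim y = k →
      Rel P x (P.tgtIter (k - i + 1) y) →
      Rel P (.comp i k (.unit i x) y) y
  | rho_unit {k i x y} : i ≤ k → Compat P x → Compat P y →
      dimT P.dim x = k → dimT P.dim y + 1 = i →
      Rel P (P.srcIter (k - i + 1) x) y →
      Rel P (.comp k i x (.unit i y)) x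
  | rho_push {i k x y} : i < k → Compat P x → Compat P y →
      dimT P.dim x = i → dimT P.dim y + 1 = k →
      Rel P (P.srcT x) (P.tgtIter (k - i) y) →
      Rel P (.comp i k x (.unit k y)) (.unit k (.comp i (k - 1) x y))
  | lam_push {k i x y} : i < k → Compat P x → Compat P y →
      dimT P.dim x + 1 = k → dimT P.dim y = i →
      Rel P (P.srcIter (k - i) x) (P.tgtT y) →
      Rel P (.comp k i (.unit k x) y) (.unit k (.comp (k - 1) i x y))
  | assoc_kkk {k x y z} : Compat P x → Compat P y → Compat P z →
      dimT P.dim x = k → dimT P.dim y = k → dimT P.dim z = k →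
      Rel P (P.srcT x) (P.tgtT y) → Rel P (P.srcT y) (P.tgtT z) →
      Rel P (.comp k k (.comp k k x y) z) (.comp k k x (.comp k k y z))
  | assoc_iik {i k x y z} : i < k → Compat P x → Compat P y → Compat P z →
      dimT P.dim x = i → dimT P.dim y = i → dimT P.dim z = k →
      Rel P (P.srcT x) (P.tgtT y) → Rel P (P.srcT y) (P.tgtIter (k - i + 1) z) →
      Rel P (.comp i k (.comp i i x y) z) (.comp i k x (.comp i k y z))
  | assoc_iki {i k x y z} : i < k → Compat P x → Compat P y → Compat P z →
      dimT P.dim x = i → dimT P.dim y = k → dimT P.dim z = i →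
      Rel P (P.srcT x) (P.tgtIter (k - i + 1) y) → Rel P (P.srcIter (k - i + 1) y) (P.tgtT z) →
      Rel P (.comp k i (.comp i k x y) z) (.comp i k x (.comp k i y z))
  | assoc_kii {i k x y z} : i < k → Compat P x → Compat P y → Compat P z →
      dimT P.dim x = k → dimT P.dim y = i → dimT P.dim z = i →
      Rel P (P.srcIter (k - i + 1) x) (P.tgtT y) → Rel P (P.srcT y) (P.tgtT z) →
      Rel P (.comp k i (.comp k i x y) z) (.comp k i x (.comp i i y z))
  | assoc_ikk {i k x y z} : i < k → Compat P x → Compat P y → Compat P z →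
      dimT P.dim x = i → dimT P.dim y = k → dimT P.dim z = k →
      Rel P (P.srcT x) (P.tgtIter (k - i + 1) y) → Rel P (P.srcT y) (P.tgtT z) →
      Rel P (.comp i k x (.comp k k y z)) (.comp k k (.comp i k x y) (.comp i k x z))
  | assoc_kki {i k x y z} : i < k → Compat P x → Compat P y → Compat P z →
      dimT P.dim x = k → dimT P.dim y = k → dimT P.dim z = i →
      Rel P (P.srcT x) (P.tgtT y) → Rel P (P.srcIter (k - i + 1) y) (P.tgtT z) →
      Rel P (.comp k i (.comp k k x y) z) (.comp k k (.comp k i x z) (.comp k i y z))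
  | assoc_ijk {i j k x y z} : i < j → j < k → Compat P x → Compat P y → Compat P z →
      dimT P.dim x = i → dimT P.dim y = j → dimT P.dim z = k →
      Rel P (P.srcT x) (P.tgtIter (j - i + 1) y) → Rel P (P.srcT y) (P.tgtIter (k - j + 1) z) →
      Rel P (.comp i k x (.comp j k y z)) (.comp j k (.comp i j x y) (.comp i k x z))
  | assoc_ikj {i j k x y z} : i < j → j < k → Compat P x → Compat P y → Compat P z →
      dimT P.dim x = i → dimT P.dim y = k → dimT P.dim z = j →
      Rel P (P.srcT x) (P.tgtIter (k - i + 1) y) → Rel P (P.srcIter (k - j + 1) y) (P.tgtT z) →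
      Rel P (.comp i k x (.comp k j y z)) (.comp k j (.comp i k x y) (.comp i j x z))
  | assoc_jki {i j k x y z} : i < j → j < k → Compat P x → Compat P y → Compat P z →
      dimT P.dim x = j → dimT P.dim y = k → dimT P.dim z = i →
      Rel P (P.srcT x) (P.tgtIter (k - j + 1) y) → Rel P (P.srcIter (k - i + 1) y) (P.tgtT z) →
      Rel P (.comp k i (.comp j k x y) z) (.comp j k (.comp j i x z) (.comp k i y z))
  | assoc_kji {i j k x y z} : i < j → j < k → Compat P x → Compat P y → Compat P z →
      dimT P.dim x = k → dimT P.dim y = j → dimT P.dim z = i →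
      Rel P (P.srcIter (k - j + 1) x) (P.tgtT y) → Rel P (P.srcIter (j - i + 1) y) (P.tgtT z) →
      Rel P (.comp k i (.comp k j x y) z) (.comp k j (.comp k i x z) (.comp j i y z))

end

mutual

/-- `≗°`-compatibility: compatibility with respect to the unit-free relations only. -/
inductive CompatO (P : Precomputad) : PTree P.cells → Prop
  | leaf (c) : CompatO P (.leaf c)
  | unit {i : ℕ} {x} : CompatO P x → dimT P.dim x + 1 = i → CompatO P (.unit i x)
  | comp {i j : ℕ} {x y} : CompatO P x → CompatO P y →
      dimT P.dim x = i → dimT P.dim y = j → 1 ≤ min i j →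
      RelO P (P.srcIter (i - min i j + 1) x) (P.tgtIter (j - min i j + 1) y) →
      CompatO P (.comp i j x y)

/-- The unit-free equivalence `≗°`, generated by the relations of `ℰₙ` not involving units. -/
inductive RelO (P : Precomputad) : PTree P.cells → PTree P.cells → Prop
  | refl {x} : CompatO P x → RelO P x x
  | symm {x y} : RelO P x y → RelO P y x
  | trans {x y z} : RelO P x y → RelO P y z → RelO P x z
  | congr_comp {i j x x' y y'} : RelO P x x' → RelO P y y' →
      CompatO P (.comp i j x y) → CompatO P (.comp i j x' y') →
      RelO P (.comp i j x y) (.comp i j x' y')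
  | assoc_kkk {k x y z} : CompatO P x → CompatO P y → CompatO P z →
      dimT P.dim x = k → dimT P.dim y = k → dimT P.dim z = k →
      RelO P (P.srcT x) (P.tgtT y) → RelO P (P.srcT y) (P.tgtT z) →
      RelO P (.comp k k (.comp k k x y) z) (.comp k k x (.comp k k y z))
  | assoc_iik {i k x y z} : i < k → CompatO P x → CompatO P y → CompatO P z →
      dimT P.dim x = i → dimT P.dim y = i → dimT P.dim z = k →
      RelO P (P.srcT x) (P.tgtT y) → RelO P (P.srcT y) (P.tgtIter (k - i + 1) z) →
      RelO P (.comp i k (.comp i i x y) z) (.comp i k x (.comp i k y z))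
  | assoc_iki {i k x y z} : i < k → CompatO P x → CompatO P y → CompatO P z →
      dimT P.dim x = i → dimT P.dim y = k → dimT P.dim z = i →
      RelO P (P.srcT x) (P.tgtIter (k - i + 1) y) → RelO P (P.srcIter (k - i + 1) y) (P.tgtT z) →
      RelO P (.comp k i (.comp i k x y) z) (.comp i k x (.comp k i y z))
  | assoc_kii {i k x y z} : i < k → CompatO P x → CompatO P y → CompatO P z →
      dimT P.dim x = k → dimT P.dim y = i → dimT P.dim z = i →
      RelO P (P.srcIter (k - i + 1) x) (P.tgtT y) → RelO P (P.srcT y) (P.tgtT z) →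
      RelO P (.comp k i (.comp k i x y) z) (.comp k i x (.comp i i y z))
  | assoc_ikk {i k x y z} : i < k → CompatO P x → CompatO P y → CompatO P z →
      dimT P.dim x = i → dimT P.dim y = k → dimT P.dim z = k →
      RelO P (P.srcT x) (P.tgtIter (k - i + 1) y) → RelO P (P.srcT y) (P.tgtT z) →
      RelO P (.comp i k x (.comp k k y z)) (.comp k k (.comp i k x y) (.comp i k x z))
  | assoc_kki {i k x y z} : i < k → CompatO P x → CompatO P y → CompatO P z →
      dimT P.dim x = k → dimT P.dim y = k → dimT P.dim z = i →
      RelO P (P.srcT x) (P.tgtT y) → RelO P (P.srcIter (k - i + 1) y) (P.tgtT z) →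
      RelO P (.comp k i (.comp k k x y) z) (.comp k k (.comp k i x z) (.comp k i y z))
  | assoc_ijk {i j k x y z} : i < j → j < k → CompatO P x → CompatO P y → CompatO P z →
      dimT P.dim x = i → dimT P.dim y = j → dimT P.dim z = k →
      RelO P (P.srcT x) (P.tgtIter (j - i + 1) y) → RelO P (P.srcT y) (P.tgtIter (k - j + 1) z) →
      RelO P (.comp i k x (.comp j k y z)) (.comp j k (.comp i j x y) (.comp i k x z))
  | assoc_ikj {i j k x y z} : i < j → j < k → CompatO P x → CompatO P y → CompatO P z →
      dimT P.dim x = i → dimT P.dim y = k → dimT P.dim z = j →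
      RelO P (P.srcT x) (P.tgtIter (k - i + 1) y) → RelO P (P.srcIter (k - j + 1) y) (P.tgtT z) →
      RelO P (.comp i k x (.comp k j y z)) (.comp k j (.comp i k x y) (.comp i j x z))
  | assoc_jki {i j k x y z} : i < j → j < k → CompatO P x → CompatO P y → CompatO P z →
      dimT P.dim x = j → dimT P.dim y = k → dimT P.dim z = i →
      RelO P (P.srcT x) (P.tgtIter (k - j + 1) y) → RelO P (P.srcIter (k - i + 1) y) (P.tgtT z) →
      RelO P (.comp k i (.comp j k x y) z) (.comp j k (.comp j i x z) (.comp k i y z))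
  | assoc_kji {i j k x y z} : i < j → j < k → CompatO P x → CompatO P y → CompatO P z →
      dimT P.dim x = k → dimT P.dim y = j → dimT P.dim z = i →
      RelO P (P.srcIter (k - j + 1) x) (P.tgtT y) → RelO P (P.srcIter (j - i + 1) y) (P.tgtT z) →
      RelO P (.comp k i (.comp k j x y) z) (.comp k j (.comp k i x z) (.comp j i y z))

end

mutual

/-- Trees in normal form: `m`-ordered, no edge `u → ∘`, and every `m`-constant
component in one of the two prescribed chain shapes. -/
inductive NF {X : Type} : PTree X → Prop
  | leaf (c : X) : NF (.leaf c)
  | unit (i : ℕ) (x : PTree X) : NF x → NF (.unit i x)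
  | compEq (k : ℕ) (x y : PTree X) : NF x → notUnitRoot x → smallRoot k x →
      ChainKK k y → NF (.comp k k x y)
  | compLt (i k : ℕ) (x y : PTree X) : i < k → NF x → notUnitRoot x → smallRoot i x →
      ChainA i k y → NF (.comp i k x y)
  | compGt (i k : ℕ) (x y : PTree X) : i < k → ChainB i k x → NF y → notUnitRoot y →
      smallRoot i y → NF (.comp k i x y)

/-- Continuation of an `m`-constant `∘_{k,k}`-chain in normal form. -/
inductive ChainKK {X : Type} : ℕ → PTree X → Prop
  | cons (k : ℕ) (x y : PTree X) : NF x → notUnitRoot x → smallRoot k x →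
      ChainKK k y → ChainKK k (.comp k k x y)
  | base (k : ℕ) (t : PTree X) : NF t → notUnitRoot t → smallRoot k t → ChainKK k t

/-- Continuation of the `∘_{i,k}`-phase of a mixed `m`-constant chain in normal form. -/
inductive ChainA {X : Type} : ℕ → ℕ → PTree X → Prop
  | cons (i k : ℕ) (x y : PTree X) : NF x → notUnitRoot x → smallRoot i x →
      ChainA i k y → ChainA i k (.comp i k x y)
  | toB (i k : ℕ) (t : PTree X) : ChainB i k t → ChainA i k t

/-- Continuation of the `∘_{k,i}`-phase of a mixed `m`-constant chain in normal form. -/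
inductive ChainB {X : Type} : ℕ → ℕ → PTree X → Prop
  | cons (i k : ℕ) (x y : PTree X) : ChainB i k x → NF y → notUnitRoot y →
      smallRoot i y → ChainB i k (.comp k i x y)
  | base (i k : ℕ) (t : PTree X) : NF t → notUnitRoot t → smallRoot i t → ChainB i k t

end

/-- A computad for the `n`-sesquicategory monad: cells of dimension `≤ n+1` with
compatible source/target trees satisfying the globularity relations up to `≗`. -/
structure Computad (n : ℕ) extends Precomputad where
  dim_le : ∀ c, dim c ≤ n + 1
  src_wf : ∀ c, 1 ≤ dim c → WF dim (csrc c)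
  tgt_wf : ∀ c, 1 ≤ dim c → WF dim (ctgt c)
  src_dim : ∀ c, 1 ≤ dim c → dimT dim (csrc c) + 1 = dim c
  tgt_dim : ∀ c, 1 ≤ dim c → dimT dim (ctgt c) + 1 = dim c
  src_compat : ∀ c, 1 ≤ dim c → Compat toPrecomputad (csrc c)
  tgt_compat : ∀ c, 1 ≤ dim c → Compat toPrecomputad (ctgt c)
  glob_s : ∀ c, 2 ≤ dim c →
    Rel toPrecomputad (toPrecomputad.srcT (csrc c)) (toPrecomputad.srcT (ctgt c))
  glob_t : ∀ c, 2 ≤ dim c →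
    Rel toPrecomputad (toPrecomputad.tgtT (csrc c)) (toPrecomputad.tgtT (ctgt c))

/-- A map of computads: a dimension-preserving map of cells commuting with
source and target up to `≗`. -/
structure CompHom {n : ℕ} (C D : Computad n) where
  f : C.cells → D.cells
  dim_eq : ∀ c, D.dim (f c) = C.dim c
  src_ok : ∀ c, 1 ≤ C.dim c →
    Rel D.toPrecomputad (D.csrc (f c)) (mapTree f (C.csrc c))
  tgt_ok : ∀ c, 1 ≤ C.dim c →
    Rel D.toPrecomputad (D.ctgt (f c)) (mapTree f (C.ctgt c))

end Sesq

/-!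
The four associativity moves of `≗°` that only rebracket keep the list of leaves; the other six
distribute a subtree `x` over two subtrees `y`, `z` of strictly larger dimension, duplicating the
leaves of `x`. In a unit-free tree, if `x` has a leaf of dimension `≥ M`, then `y` and `z` each
have a leaf of dimension `≥ M + 1`, so `M < M(·)` on both sides. Hence for `M = M(w)` the ordered
list of leaves of dimension `≥ M` is invariant under `≗°`, and the order isomorphism is a cast.
-/

namespace Sesq

open PTree

namespace PTree

variable {X : Type} {dX : X → ℕ}

theorem leavesGe_comp (M i j : ℕ) (x y : PTree X) :
    leavesGe dX M (comp i j x y) = leavesGe dX M y ++ leavesGe dX M x := by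
  simp [leavesGe, leaves, List.filter_append]

theorem leavesGe_succ (M : ℕ) (t : PTree X) :
    leavesGe dX (M + 1) t = (leavesGe dX M t).filter fun c => M + 1 ≤ dX c := by
  simp only [leavesGe, List.filter_filter]
  refine List.filter_congr fun c _ => ?_
  by_cases h : M + 1 ≤ dX c <;> simp [h]; omega

theorem coe_le_Mval {w : PTree X} {j : ℕ} (h2 : 2 ≤ (leavesGe dX j w).length) :
    (j : WithBot ℕ) ≤ Mval dX w := by
  obtain ⟨c, hc⟩ := List.exists_mem_of_length_pos (by omega : 0 < (leavesGe dX j w).length)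
  obtain ⟨hcw, hjc⟩ := List.mem_filter.1 hc
  have hjc : j ≤ dX c := by simpa using hjc
  have hcd : dX c ≤ cdim dX w := List.le_max_of_le' 0 (List.mem_map_of_mem hcw) le_rfl
  have hj : j ∈ (List.range (cdim dX w + 1)).filter
      fun j => 2 ≤ ((leaves w).filter fun c => j ≤ dX c).length :=
    List.mem_filter.2 ⟨List.mem_range.2 (by omega), by simpa [leavesGe] using h2⟩
  refine List.le_max_of_le' ⊥ (x := (j : WithBot ℕ)) ?_ le_rfl
  simpa using hj

theorem WF.le_dimT {x : PTree X} (hx : WF dX x) {c : X} (hc : c ∈ leaves x) :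
    dX c ≤ dimT dX x := by
  induction x with
  | leaf d => simp_all [leaves, dimT]
  | unit i x ih => exact (ih hx.1 hc).trans (hx.2 ▸ Nat.le_succ _)
  | comp i j x y ihx ihy =>
    obtain ⟨hx, hy, rfl, rfl, -⟩ := hx
    rcases List.mem_append.1 hc with hc | hc
    · exact (ihy hy hc).trans (le_max_right _ _)
    · exact (ihx hx hc).trans (le_max_left _ _)

theorem WF.exists_dimT_le {x : PTree X} (hx : WF dX x) (hu : UnitFree x) :
    ∃ c ∈ leaves x, dimT dX x ≤ dX c := by
  induction x with
  | leaf d => exact ⟨d, List.mem_singleton_self d, le_rfl⟩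
  | unit => exact hu.elim
  | comp i j x y ihx ihy =>
    obtain ⟨hx, hy, rfl, rfl, -⟩ := hx
    rcases le_total (dimT dX x) (dimT dX y) with hxy | hyx
    · obtain ⟨c, hc, hyc⟩ := ihy hy hu.2
      exact ⟨c, List.mem_append_left _ hc, max_le (hxy.trans hyc) hyc⟩
    · obtain ⟨c, hc, hxc⟩ := ihx hx hu.1
      exact ⟨c, List.mem_append_right _ hc, max_le hxc (hyx.trans hxc)⟩

theorem WF.leavesGe_eq_nil {x : PTree X} (hx : WF dX x) {M : ℕ} (hM : dimT dX x < M) :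
    leavesGe dX M x = [] :=
  List.filter_eq_nil_iff.2 fun c hc => by simpa using (hx.le_dimT hc).trans_lt hM

theorem WF.leavesGe_ne_nil {x : PTree X} (hx : WF dX x) (hu : UnitFree x) {M : ℕ}
    (hM : M ≤ dimT dX x) : leavesGe dX M x ≠ [] := by
  obtain ⟨c, hc, hxc⟩ := hx.exists_dimT_le hu
  exact List.ne_nil_of_mem (List.mem_filter.2 ⟨hc, by simpa using hM.trans hxc⟩)

theorem WF.leavesGe_eq_nil_or_length_pos {x y z : PTree X} (hx : WF dX x) (hy : WF dX y)
    (hz : WF dX z) (huy : UnitFree y) (huz : UnitFree z) (hxy : dimT dX x < dimT dX y)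
    (hxz : dimT dX x < dimT dX z) (M : ℕ) :
    leavesGe dX M x = [] ∨
      0 < (leavesGe dX (M + 1) y).length ∧ 0 < (leavesGe dX (M + 1) z).length := by
  by_cases hM : M ≤ dimT dX x
  · simp only [List.length_pos_iff]
    exact Or.inr ⟨hy.leavesGe_ne_nil huy (by omega), hz.leavesGe_ne_nil huz (by omega)⟩
  · exact Or.inl (hx.leavesGe_eq_nil (by omega))

/-- The second alternative forces `M < M(a)` and `M < M(b)` (`coe_le_Mval`). -/
def LeavesGeAgree (dX : X → ℕ) (M : ℕ) (a b : PTree X) : Prop :=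
  leavesGe dX M a = leavesGe dX M b ∨
    (2 ≤ (leavesGe dX (M + 1) a).length ∧ 2 ≤ (leavesGe dX (M + 1) b).length)

theorem LeavesGeAgree.symm {M : ℕ} {a b : PTree X} (h : LeavesGeAgree dX M a b) :
    LeavesGeAgree dX M b a :=
  h.imp Eq.symm And.symm

theorem LeavesGeAgree.trans {M : ℕ} {a b c : PTree X} (hab : LeavesGeAgree dX M a b)
    (hbc : LeavesGeAgree dX M b c) : LeavesGeAgree dX M a c := by
  rcases hab with hab | ⟨ha, hb⟩ <;> rcases hbc with hbc | ⟨hb', hc⟩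
  · exact Or.inl (hab.trans hbc)
  · exact Or.inr ⟨by rwa [leavesGe_succ, hab, ← leavesGe_succ], hc⟩
  · exact Or.inr ⟨ha, by rwa [leavesGe_succ, ← hbc, ← leavesGe_succ]⟩
  · exact Or.inr ⟨ha, hc⟩

theorem LeavesGeAgree.comp {M : ℕ} {x x' y y' : PTree X} (hx : LeavesGeAgree dX M x x')
    (hy : LeavesGeAgree dX M y y') (i j i' j' : ℕ) :
    LeavesGeAgree dX M (comp i j x y) (comp i' j' x' y') := by
  unfold LeavesGeAgree at *
  simp only [leavesGe_comp, List.length_append]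
  rcases hx with hx | hx
  · rcases hy with hy | hy
    · exact Or.inl (by rw [hx, hy])
    · omega
  · omega

/-- Distributing a low-dimensional `x` over `y` and `z` duplicates its leaves; this matters only
if one of them has dimension `≥ M`, and then `y` and `z` supply two leaves of dimension `≥ M + 1`. -/
theorem leavesGeAgree_distrib_left {M : ℕ} {x y z : PTree X} (hx : WF dX x) (hy : WF dX y)
    (hz : WF dX z) (huy : UnitFree y) (huz : UnitFree z) (hxy : dimT dX x < dimT dX y)
    (hxz : dimT dX x < dimT dX z) (i j k l m n o p q r : ℕ) :
    LeavesGeAgree dX M (comp i j x (comp k l y z)) (comp m n (comp o p x y) (comp q r x z)) := by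
  rcases hx.leavesGe_eq_nil_or_length_pos hy hz huy huz hxy hxz M with hx0 | ⟨hy', hz'⟩
  · exact Or.inl (by simp [leavesGe_comp, hx0])
  · right; simp only [leavesGe_comp, List.length_append]; omega

theorem leavesGeAgree_distrib_right {M : ℕ} {x y z : PTree X} (hx : WF dX x) (hy : WF dX y)
    (hz : WF dX z) (hux : UnitFree x) (huy : UnitFree y) (hzx : dimT dX z < dimT dX x)
    (hzy : dimT dX z < dimT dX y) (i j k l m n o p q r : ℕ) :
    LeavesGeAgree dX M (comp i j (comp k l x y) z) (comp m n (comp o p x z) (comp q r y z)) := by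
  rcases hz.leavesGe_eq_nil_or_length_pos hx hy hux huy hzx hzy M with hz0 | ⟨hx', hy'⟩
  · exact Or.inl (by simp [leavesGe_comp, hz0])
  · right; simp only [leavesGe_comp, List.length_append]; omega

end PTree

theorem CompatO.wf {P : Precomputad} {x : PTree P.cells} (hx : CompatO P x) : WF P.dim x := by
  induction x with
  | leaf => trivial
  | unit i x ih =>
    cases hx with
    | unit hx hi => exact ⟨ih hx, hi⟩
  | comp i j x y ihx ihy =>
    cases hx with
    | comp hx hy hi hj hij _ => exact ⟨ihx hx, ihy hy, hi, hj, by omega, by omega⟩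

theorem RelO.unitFree_iff {P : Precomputad} {a b : PTree P.cells} (h : RelO P a b) :
    UnitFree a ↔ UnitFree b := by
  induction h using RelO.rec (motive_1 := fun _ _ => True) with
  | leaf | unit | comp => trivial
  | refl => rfl
  | symm _ ih => exact ih.symm
  | trans _ _ ih₁ ih₂ => exact ih₁.trans ih₂
  | congr_comp _ _ _ _ ihx ihy => exact and_congr ihx ihy
  | _ => simp only [UnitFree]; tauto

theorem RelO.leavesGeAgree {P : Precomputad} {a b : PTree P.cells} (h : RelO P a b)
    (hu : UnitFree a) (M : ℕ) : LeavesGeAgree P.dim M a b := by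
  induction h using RelO.rec (motive_1 := fun _ _ => True) with
  | leaf | unit | comp => trivial
  | refl => exact Or.inl rfl
  | symm hab ih => exact (ih (hab.unitFree_iff.2 hu)).symm
  | trans hab _ ih₁ ih₂ => exact (ih₁ hu).trans (ih₂ (hab.unitFree_iff.1 hu))
  | congr_comp _ _ _ _ ihx ihy => exact (ihx hu.1).comp (ihy hu.2) _ _ _ _
  | assoc_kkk | assoc_iik | assoc_iki | assoc_kii =>
    exact Or.inl (by simp [leavesGe_comp])
  | assoc_ikk hik hx hy hz hdx hdy hdz
  | assoc_ijk hij hjk hx hy hz hdx hdy hdz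
  | assoc_ikj hij hjk hx hy hz hdx hdy hdz =>
    exact leavesGeAgree_distrib_left hx.wf hy.wf hz.wf hu.2.1 hu.2.2 (by omega) (by omega) ..
  | assoc_kki hik hx hy hz hdx hdy hdz
  | assoc_jki hij hjk hx hy hz hdx hdy hdz
  | assoc_kji hij hjk hx hy hz hdx hdy hdz =>
    exact leavesGeAgree_distrib_right hx.wf hy.wf hz.wf hu.1.1 hu.1.2 (by omega) (by omega) ..

/-- If `w ≗° w̃` and `M = M(w) = M(w̃)`, then there is a (necessarily
unique) order-preserving bijection `L_{≥M}(w) → L_{≥M}(w̃)` (here expressed as an order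
isomorphism between the index sets of the ordered lists of leaves of dimension `≥ M`). -/
theorem exists_orderIso_leavesGe {n : ℕ} (C : Computad n) (w w' : PTree C.cells)
    (huw : PTree.UnitFree w) (huw' : PTree.UnitFree w')
    (hw : CompatO C.toPrecomputad w) (hw' : CompatO C.toPrecomputad w')
    (h : RelO C.toPrecomputad w w') (M : ℕ)
    (hM : PTree.Mval C.dim w = (M : WithBot ℕ))
    (hM' : PTree.Mval C.dim w' = (M : WithBot ℕ)) :
    Nonempty (Fin (PTree.leavesGe C.dim M w).length ≃o
      Fin (PTree.leavesGe C.dim M w').length) := by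
  rcases h.leavesGeAgree huw M with heq | ⟨htwo, -⟩
  · exact ⟨Fin.castOrderIso (congrArg List.length heq)⟩
  · exact absurd (hM ▸ coe_le_Mval htwo) (by norm_cast; omega)

end Sesq
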